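/- The n-player average Nash equilibrium response satisfies ā* = const - λ̂_b·q̂, where λ̂_b = ĉ/(1+ĉ) and ĉ = (1/n)Σᵢ b/(b+cᵢ). Concretely, the unique maximizer a* of Φ satisfies (b + cᵢ)a*ᵢ = eᵢ + b(ȳ₀ - ā* - q̂) for each i, and averaging yields ā* = (1+ĉ)⁻¹[(1/n)Σᵢ (eᵢ + b(ȳ₀ - q̂))/(b+cᵢ)]; in particular ā* is an affine, strictly decreasing function of q̂ with slope -(1/(1+ĉ))·ĉ = -λ̂_b. -/

import Mathlib

open Finset

lemma sum_update_aux {n : ℕ} (g : Fin n → ℝ → ℝ) (a : Fin n → ℝ) (i : Fin n) (t : ℝ) :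
    ∑ j, g j (Function.update a i t j) = ∑ j, g j (a j) + g i t - g i (a i) := by
  classical
  rw [← Finset.sum_erase_add _ _ (Finset.mem_univ i),
      ← Finset.sum_erase_add _ (fun j => g j (a j)) (Finset.mem_univ i)]
  have : ∑ j ∈ Finset.univ.erase i, g j (Function.update a i t j)
      = ∑ j ∈ Finset.univ.erase i, g j (a j) := by
    refine Finset.sum_congr rfl fun j hj => ?_
    rw [Function.update_of_ne (Finset.ne_of_mem_erase hj)]
  rw [this, Function.update_self]
  ring

lemma foc_aux (A α : ℝ) (hα : α < 0) (h : ∀ t : ℝ, A * t + α * t ^ 2 ≤ 0) : A = 0 := by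
  have h1 := h (-A / (2 * α))
  have hαne : α ≠ 0 := ne_of_lt hα
  have h2 : A * (-A / (2 * α)) + α * (-A / (2 * α)) ^ 2 = -(A ^ 2) / (4 * α) := by
    field_simp; ring
  rw [h2] at h1
  have h3 : -(A ^ 2) ≥ 0 := by
    rcases div_nonpos_iff.mp h1 with ⟨h4, h5⟩ | ⟨h4, h5⟩
    · nlinarith
    · linarith
  nlinarith [sq_nonneg A]

/-- The potential `Φ(a) = Σᵢ [eᵢaᵢ - ½(b+cᵢ)aᵢ²] - (n/2)b(ȳ₀ - ā - q̂)²`,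
with `eᵢ = k - uᵢ + b·y⁰ᵢ` and `ȳ₀ = (1/n)Σᵢ y⁰ᵢ`. -/
noncomputable def potentialPhi (n : ℕ) (b k qhat : ℝ) (c u y0 : Fin n → ℝ)
    (a : Fin n → ℝ) : ℝ :=
  ∑ i, ((k - u i + b * y0 i) * a i - (1/2) * (b + c i) * (a i) ^ 2)
    - ((n : ℝ) / 2) * b *
      ((1 / (n : ℝ)) * ∑ i, y0 i - (1 / (n : ℝ)) * ∑ i, a i - qhat) ^ 2

lemma potentialPhi_update {n : ℕ} (hn : (0:ℝ) < n) (b k qhat : ℝ)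
    (c u y0 astar : Fin n → ℝ) (i : Fin n) (t : ℝ) :
    potentialPhi n b k qhat c u y0 (Function.update astar i (astar i + t))
      = potentialPhi n b k qhat c u y0 astar
        + ((k - u i + b * y0 i) - (b + c i) * astar i
            + b * ((1/(n:ℝ)) * ∑ j, y0 j - (1/(n:ℝ)) * ∑ j, astar j - qhat)) * t
        + (-(b + c i)/2 - b/(2*(n:ℝ))) * t ^ 2 := by
  have h1 := sum_update_aux (fun j x => (k - u j + b * y0 j) * x - (1/2) * (b + c j) * x ^ 2)
    astar i (astar i + t)
  have h2 := sum_update_aux (fun _ x => x) astar i (astar i + t)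
  unfold potentialPhi
  rw [h1, h2]
  generalize (∑ j, ((k - u j + b * y0 j) * astar j - 1 / 2 * (b + c j) * astar j ^ 2)) = S
  have hne : (n:ℝ) ≠ 0 := ne_of_gt hn
  field_simp
  ring

/-- The unique maximizer `a*` of `Φ` satisfies the first-order conditions
`(b + cᵢ)a*ᵢ = eᵢ + b(ȳ₀ - ā* - q̂)`, and the average response is
`ā* = (1+ĉ)⁻¹ (1/n)Σᵢ (eᵢ + b(ȳ₀ - q̂))/(b + cᵢ)`, an affine function of `q̂` with slope
`-λ̂_b = -ĉ/(1+ĉ)` where `ĉ = (1/n)Σᵢ b/(b+cᵢ)`. -/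
theorem nash_average_response (n : ℕ) (hn : 1 ≤ n) (b k qhat : ℝ) (hb : 0 < b)
    (c u y0 : Fin n → ℝ) (hc : ∀ i, 0 < c i)
    (astar : Fin n → ℝ)
    (hmax : ∀ a : Fin n → ℝ,
      potentialPhi n b k qhat c u y0 a ≤ potentialPhi n b k qhat c u y0 astar) :
    (∀ i : Fin n,
      (b + c i) * astar i =
        (k - u i + b * y0 i)
          + b * ((1 / (n : ℝ)) * ∑ j, y0 j - (1 / (n : ℝ)) * ∑ j, astar j - qhat)) ∧
    (1 / (n : ℝ)) * ∑ i, astar i =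
      (1 / (1 + (1 / (n : ℝ)) * ∑ i, b / (b + c i))) *
        ((1 / (n : ℝ)) * ∑ i,
          ((k - u i + b * y0 i) + b * ((1 / (n : ℝ)) * (∑ j, y0 j) - qhat)) / (b + c i)) ∧
    (1 / (n : ℝ)) * ∑ i, astar i =
      (1 / (1 + (1 / (n : ℝ)) * ∑ i, b / (b + c i))) *
        ((1 / (n : ℝ)) * ∑ i,
          ((k - u i + b * y0 i) + b * ((1 / (n : ℝ)) * ∑ j, y0 j)) / (b + c i))
      - (((1 / (n : ℝ)) * ∑ i, b / (b + c i)) /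
          (1 + (1 / (n : ℝ)) * ∑ i, b / (b + c i))) * qhat := by
  have hnpos : (0:ℝ) < n := by exact_mod_cast Nat.lt_of_lt_of_le Nat.zero_lt_one hn
  have hne : (n:ℝ) ≠ 0 := ne_of_gt hnpos
  have hbc : ∀ i, (0:ℝ) < b + c i := fun i => by have := hc i; linarith
  -- First-order conditions
  have foc : ∀ i : Fin n,
      (b + c i) * astar i =
        (k - u i + b * y0 i)
          + b * ((1 / (n : ℝ)) * ∑ j, y0 j - (1 / (n : ℝ)) * ∑ j, astar j - qhat) := by
    intro i
    have hαneg : (-(b + c i)/2 - b/(2*(n:ℝ))) < 0 := by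
      have h1 : 0 < b / (2*(n:ℝ)) := div_pos hb (by linarith)
      have := hbc i; linarith
    have hineq : ∀ t : ℝ,
        ((k - u i + b * y0 i) - (b + c i) * astar i
            + b * ((1/(n:ℝ)) * ∑ j, y0 j - (1/(n:ℝ)) * ∑ j, astar j - qhat)) * t
          + (-(b + c i)/2 - b/(2*(n:ℝ))) * t ^ 2 ≤ 0 := by
      intro t
      have h1 := hmax (Function.update astar i (astar i + t))
      rw [potentialPhi_update hnpos b k qhat c u y0 astar i t] at h1
      linarith
    have hA := foc_aux _ _ hαneg hineq
    linarith [hA]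
  refine ⟨foc, ?_, ?_⟩ <;>
  · have hchatpos : 0 < (1 / (n : ℝ)) * ∑ i, b / (b + c i) := by
      apply mul_pos (by positivity)
      apply Finset.sum_pos (fun i _ => div_pos hb (hbc i))
      exact Finset.univ_nonempty_iff.mpr (Fin.pos_iff_nonempty.mp (by omega))
    have h1cne : (1 + (1 / (n : ℝ)) * ∑ i, b / (b + c i)) ≠ 0 := by positivity
    have hterm : ∀ i : Fin n,
        astar i + ((1 / (n : ℝ)) * ∑ j, astar j) * (b / (b + c i)) =
          ((k - u i + b * y0 i) + b * ((1 / (n : ℝ)) * (∑ j, y0 j) - qhat)) / (b + c i) := by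
      intro i
      have hf := foc i
      have hb0 : (b + c i) ≠ 0 := ne_of_gt (hbc i)
      field_simp at hf ⊢
      linear_combination hf
    have hkey : (∑ i, astar i) + ((1 / (n : ℝ)) * ∑ j, astar j) * (∑ i, b / (b + c i))
        = ∑ i, ((k - u i + b * y0 i) + b * ((1 / (n : ℝ)) * (∑ j, y0 j) - qhat)) / (b + c i) := by
      rw [Finset.mul_sum, ← Finset.sum_add_distrib]
      exact Finset.sum_congr rfl fun i _ => hterm i
    have part2 : (1 / (n : ℝ)) * ∑ i, astar i =
        (1 / (1 + (1 / (n : ℝ)) * ∑ i, b / (b + c i))) *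
          ((1 / (n : ℝ)) * ∑ i,
            ((k - u i + b * y0 i) + b * ((1 / (n : ℝ)) * (∑ j, y0 j) - qhat)) / (b + c i)) := by
      rw [show (1 / (1 + (1 / (n : ℝ)) * ∑ i, b / (b + c i))) *
            ((1 / (n : ℝ)) * ∑ i,
              ((k - u i + b * y0 i) + b * ((1 / (n : ℝ)) * (∑ j, y0 j) - qhat)) / (b + c i))
          = ((1 / (n : ℝ)) * ∑ i,
              ((k - u i + b * y0 i) + b * ((1 / (n : ℝ)) * (∑ j, y0 j) - qhat)) / (b + c i))
            / (1 + (1 / (n : ℝ)) * ∑ i, b / (b + c i)) from by ring,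
        eq_div_iff h1cne]
      linear_combination (1 / (n:ℝ)) * hkey
    have hsplit : ∑ i, ((k - u i + b * y0 i) + b * ((1 / (n : ℝ)) * (∑ j, y0 j) - qhat)) / (b + c i)
        = ∑ i, ((k - u i + b * y0 i) + b * ((1 / (n : ℝ)) * ∑ j, y0 j)) / (b + c i)
          - qhat * ∑ i, b / (b + c i) := by
      rw [eq_sub_iff_add_eq,
        show qhat * ∑ i, b / (b + c i) = ∑ i, qhat * (b / (b + c i)) from Finset.mul_sum _ _ _,
        ← Finset.sum_add_distrib]
      refine Finset.sum_congr rfl fun i _ => ?_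
      have hb0 : (b + c i) ≠ 0 := ne_of_gt (hbc i)
      field_simp
      ring
    first
      | exact part2
      | (rw [part2, hsplit]; ring)
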